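/- If q is a biquaternion with q q^# = 1 and p is an Hermitian biquaternion (p^* = p^#), then p' = q p q^{#*} is again Hermitian and satisfies N(p') = N(p), i.e., the Minkowski norm t² - x² - y² - z² is preserved. -/

import Mathlib

open Quaternion

/-- Componentwise complex conjugation on biquaternions. -/
def bqConj (a : ℍ[ℂ]) : ℍ[ℂ] :=
  ⟨starRingEnd ℂ a.re, starRingEnd ℂ a.imI, starRingEnd ℂ a.imJ, starRingEnd ℂ a.imK⟩

/-!
Complex conjugation `bqConj` is a ring automorphism of `ℍ[ℂ]` commuting with `star`. Hence
`q ↦ q p q^{#*}` maps `p^* = p^#` to itself, and the quaternion norm `N = normSq`, being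
multiplicative with `N (q^{#*}) = conj (N q) = 1`, is preserved by the sandwich.
-/

@[simp] lemma bqConj_re (a : ℍ[ℂ]) : (bqConj a).re = starRingEnd ℂ a.re := rfl
@[simp] lemma bqConj_imI (a : ℍ[ℂ]) : (bqConj a).imI = starRingEnd ℂ a.imI := rfl
@[simp] lemma bqConj_imJ (a : ℍ[ℂ]) : (bqConj a).imJ = starRingEnd ℂ a.imJ := rfl
@[simp] lemma bqConj_imK (a : ℍ[ℂ]) : (bqConj a).imK = starRingEnd ℂ a.imK := rfl

lemma bqConj_mul (a b : ℍ[ℂ]) : bqConj (a * b) = bqConj a * bqConj b := by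
  ext <;> simp [re_mul, imI_mul, imJ_mul, imK_mul]

lemma bqConj_star (a : ℍ[ℂ]) : bqConj (star a) = star (bqConj a) := by
  ext <;> simp

lemma bqConj_bqConj (a : ℍ[ℂ]) : bqConj (bqConj a) = a := by
  ext <;> simp

lemma normSq_bqConj (a : ℍ[ℂ]) : normSq (bqConj a) = starRingEnd ℂ (normSq a) := by
  simp [normSq_def']

lemma bqConj_sandwich_eq_star_of_bqConj_eq_star (q : ℍ[ℂ]) {p : ℍ[ℂ]} (hp : bqConj p = star p) :
    bqConj (q * p * bqConj (star q)) = star (q * p * bqConj (star q)) := by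
  rw [bqConj_mul, bqConj_mul, bqConj_bqConj, hp, star_mul, star_mul, ← bqConj_star, star_star,
    mul_assoc]

lemma normSq_sandwich_of_mul_star_eq_one {q : ℍ[ℂ]} (hq : q * star q = 1) (p : ℍ[ℂ]) :
    normSq (q * p * bqConj (star q)) = normSq p := by
  have hq1 : normSq q = 1 := coe_injective ((self_mul_star q).symm.trans hq)
  simp [normSq_bqConj, hq1]

/-- If `q` is a biquaternion with `q q^# = 1` and `p` is Hermitian (`p^* = p^#`),
then `p' = q p q^{#*}` is again Hermitian and `p' p'^# = p p^#`, i.e. the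
Minkowski norm is preserved. -/
theorem biquaternion_lorentz (q p : ℍ[ℂ]) (hq : q * star q = 1) (hp : bqConj p = star p) :
    bqConj (q * p * bqConj (star q)) = star (q * p * bqConj (star q)) ∧
    (q * p * bqConj (star q)) * star (q * p * bqConj (star q)) = p * star p := by
  refine ⟨bqConj_sandwich_eq_star_of_bqConj_eq_star q hp, ?_⟩
  rw [self_mul_star, self_mul_star, normSq_sandwich_of_mul_star_eq_one hq]
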